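/- Fix p ≤ -1 and fix α, r with 0 < α < 1 < r. Then the function q ↦ Θ_{p,q}{α, r} is monotone decreasing on [1, ∞): for all 1 ≤ q₁ ≤ q₂, one has Θ_{p,q₁}{α, r} ≥ Θ_{p,q₂}{α, r}. -/

import Mathlib

open Real Filter

/-- `F_{p,q}(s, α, r) = ( ((1 - s^{2p})/(1 - r^{2p}))(r² + α²)^q
  + ((s^{2p} - r^{2p})/(1 - r^{2p}))(1 + α² r²)^q )^{1/q} - s² - α² r² s⁻²`. -/
noncomputable def Fpq (p q α r s : ℝ) : ℝ :=
  ((1 - s ^ (2 * p)) / (1 - r ^ (2 * p)) * (r ^ 2 + α ^ 2) ^ q +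
    (s ^ (2 * p) - r ^ (2 * p)) / (1 - r ^ (2 * p)) * (1 + α ^ 2 * r ^ 2) ^ q) ^ (1 / q) -
  s ^ 2 - α ^ 2 * r ^ 2 * s ^ (-2 : ℝ)

/-- The period function `Θ_{p,q}{α, r} = ∫_1^r ds / √(F_{p,q}(s, α, r))`. -/
noncomputable def ThetaPQ (p q α r : ℝ) : ℝ :=
  ∫ s in (1 : ℝ)..r, (Real.sqrt (Fpq p q α r s))⁻¹

/-!
For `1 ≤ s ≤ r` the coefficients `(1 - s^{2p})/(1 - r^{2p})` and `(s^{2p} - r^{2p})/(1 - r^{2p})`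
are nonnegative weights with sum `1`, so the root in `F_{p,q}` is a weighted power mean of
`r² + α²` and `1 + α² r²`. Power means increase with the exponent, hence `F_{p,q}` increases and
the integrand `1/√F_{p,q}` decreases in `q`.

Comparing the integrals also requires integrability, since a non-integrable integrand has interval
integral `0`. Convexity of `s ↦ s^{2p}` bounds the first weight below by `(s - 1)/(r - 1)`, and as
`r² + α² ≥ 1 + α² r²` this gives `F_{p,q} ≥ F_{p,1} ≥ (s - 1)(r - s)`; finally
`1/√((s - 1)(r - s))` is integrable on `(1, r)`.
-/

open MeasureTheory Set

lemma convexOn_rpow_of_nonpos {c : ℝ} (hc : c ≤ 0) :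
    ConvexOn ℝ (Ioi 0) fun x : ℝ => x ^ c := by
  refine ⟨convex_Ioi 0, fun x (hx : 0 < x) y (hy : 0 < y) a b ha hb hab => ?_⟩
  simp only [smul_eq_mul]
  calc (a * x + b * y) ^ c ≤ (x ^ a * y ^ b) ^ c :=
        rpow_le_rpow_of_nonpos (by positivity)
          (geom_mean_le_arith_mean2_weighted ha hb hx.le hy.le hab) hc
    _ = (x ^ c) ^ a * (y ^ c) ^ b := by
        rw [mul_rpow (by positivity) (by positivity), ← rpow_mul hx.le, ← rpow_mul hy.le,
          ← rpow_mul hx.le, ← rpow_mul hy.le, mul_comm a, mul_comm b]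
    _ ≤ a * x ^ c + b * y ^ c :=
        geom_mean_le_arith_mean2_weighted ha hb (by positivity) (by positivity) hab

lemma div_le_one_sub_rpow_div {c r s : ℝ} (hc : c < 0) (hr : 1 < r) (hs : 1 ≤ s) (hsr : s ≤ r) :
    (s - 1) / (r - 1) ≤ (1 - s ^ c) / (1 - r ^ c) := by
  have hr₁ : 0 < r - 1 := sub_pos.2 hr
  have hchord := (convexOn_rpow_of_nonpos hc.le).2 (mem_Ioi.2 one_pos)
    (mem_Ioi.2 (zero_lt_one.trans hr)) (div_nonneg (sub_nonneg.2 hsr) hr₁.le)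
    (div_nonneg (sub_nonneg.2 hs) hr₁.le)
    (by rw [← add_div, sub_add_sub_cancel, div_self hr₁.ne'])
  have hs_eq : (r - s) / (r - 1) * 1 + (s - 1) / (r - 1) * r = s := by
    field_simp; ring
  simp only [smul_eq_mul, one_rpow, hs_eq] at hchord
  rw [div_le_div_iff₀ hr₁ (sub_pos.2 (rpow_lt_one_of_one_lt_of_neg hr hc))]
  have := mul_le_mul_of_nonneg_right hchord hr₁.le
  field_simp at this
  linarith

lemma rpow_mean_le_rpow_mean {w₁ w₂ a b q₁ q₂ : ℝ} (hw₁ : 0 ≤ w₁) (hw₂ : 0 ≤ w₂)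
    (hw : w₁ + w₂ = 1) (ha : 0 ≤ a) (hb : 0 ≤ b) (hq₁ : 0 < q₁) (h₁₂ : q₁ ≤ q₂) :
    (w₁ * a ^ q₁ + w₂ * b ^ q₁) ^ (1 / q₁) ≤ (w₁ * a ^ q₂ + w₂ * b ^ q₂) ^ (1 / q₂) := by
  have hq₂ : 0 < q₂ := hq₁.trans_le h₁₂
  have hjensen := (convexOn_rpow ((one_le_div hq₁).2 h₁₂)).2 (mem_Ici.2 (rpow_nonneg ha q₁))
    (mem_Ici.2 (rpow_nonneg hb q₁)) hw₁ hw₂ hw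
  simp only [smul_eq_mul, ← rpow_mul ha, ← rpow_mul hb, mul_div_cancel₀ _ hq₁.ne'] at hjensen
  calc (w₁ * a ^ q₁ + w₂ * b ^ q₁) ^ (1 / q₁)
      = ((w₁ * a ^ q₁ + w₂ * b ^ q₁) ^ (q₂ / q₁)) ^ (1 / q₂) := by
        rw [← rpow_mul (by positivity)]; field_simp
    _ ≤ (w₁ * a ^ q₂ + w₂ * b ^ q₂) ^ (1 / q₂) :=
        rpow_le_rpow (by positivity) hjensen (by positivity)

lemma sqrt_add_le_sqrt_add_sqrt {x y : ℝ} (hx : 0 ≤ x) (hy : 0 ≤ y) : √(x + y) ≤ √x + √y := by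
  rw [sqrt_le_left (by positivity), add_sq, sq_sqrt hx, sq_sqrt hy]
  nlinarith [sqrt_nonneg x, sqrt_nonneg y]

lemma inv_sqrt_mul_le {x y : ℝ} (hx : 0 < x) (hy : 0 < y) :
    (√(x * y))⁻¹ ≤ (√(x + y))⁻¹ * ((√x)⁻¹ + (√y)⁻¹) := by
  have hx' := sqrt_pos.2 hx
  have hy' := sqrt_pos.2 hy
  have hxy := sqrt_pos.2 (add_pos hx hy)
  rw [sqrt_mul hx.le, inv_add_inv hx'.ne' hy'.ne', ← div_eq_inv_mul, div_div, ← one_div,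
    div_le_div_iff₀ (by positivity) (by positivity)]
  nlinarith [sqrt_add_le_sqrt_add_sqrt hx.le hy.le, mul_pos hx' hy']

lemma integrableOn_inv_sqrt_sub_mul_sub {a b : ℝ} (hab : a < b) :
    IntegrableOn (fun s => (√((s - a) * (b - s)))⁻¹) (Ioo a b) := by
  have hpow : IntervalIntegrable (fun x : ℝ => x ^ (-(1 / 2) : ℝ)) volume 0 (b - a) :=
    intervalIntegral.intervalIntegrable_rpow' (by norm_num)
  have hleft : IntervalIntegrable (fun s => (s - a) ^ (-(1 / 2) : ℝ)) volume a b := by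
    simpa using hpow.comp_sub_right a
  have hright : IntervalIntegrable (fun s => (b - s) ^ (-(1 / 2) : ℝ)) volume a b := by
    simpa using (hpow.comp_sub_left b).symm
  have hdom := (hleft.add hright).const_mul (√(b - a))⁻¹
  rw [intervalIntegrable_iff_integrableOn_Ioo_of_le hab.le] at hdom
  refine hdom.mono' (by fun_prop) (ae_restrict_of_forall_mem measurableSet_Ioo fun s hs => ?_)
  have ha : 0 < s - a := sub_pos.2 hs.1
  have hb : 0 < b - s := sub_pos.2 hs.2
  rw [norm_of_nonneg (by positivity), rpow_neg ha.le, rpow_neg hb.le,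
    ← sqrt_eq_rpow, ← sqrt_eq_rpow]
  simpa using inv_sqrt_mul_le ha hb

lemma Fpq_le_Fpq_of_le {p α r s q₁ q₂ : ℝ} (hp : p < 0) (hr : 1 < r) (hs : 1 ≤ s) (hsr : s ≤ r)
    (hq₁ : 0 < q₁) (h₁₂ : q₁ ≤ q₂) : Fpq p q₁ α r s ≤ Fpq p q₂ α r s := by
  have hrc : 0 < 1 - r ^ (2 * p) := sub_pos.2 (rpow_lt_one_of_one_lt_of_neg hr (by linarith))
  have hw₁ := (div_nonneg (sub_nonneg.2 hs) (sub_nonneg.2 hr.le)).trans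
    (div_le_one_sub_rpow_div (by linarith : 2 * p < 0) hr hs hsr)
  have hw₂ : 0 ≤ (s ^ (2 * p) - r ^ (2 * p)) / (1 - r ^ (2 * p)) :=
    div_nonneg (sub_nonneg.2 (rpow_le_rpow_of_nonpos (by linarith) hsr (by linarith))) hrc.le
  unfold Fpq
  gcongr ?_ - _ - _
  exact rpow_mean_le_rpow_mean hw₁ hw₂
    (by rw [← add_div, sub_add_sub_cancel, div_self hrc.ne'])
    (by positivity) (by positivity) hq₁ h₁₂

lemma sub_one_mul_sub_le_Fpq_one {p α r s : ℝ} (hp : p < 0) (hα : α ^ 2 ≤ 1) (hr : 1 < r)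
    (hs : 1 ≤ s) (hsr : s ≤ r) : (s - 1) * (r - s) ≤ Fpq p 1 α r s := by
  have hr₁ : r - 1 ≠ 0 := (sub_pos.2 hr).ne'
  have hrc : 1 - r ^ (2 * p) ≠ 0 :=
    (sub_pos.2 (rpow_lt_one_of_one_lt_of_neg hr (by linarith))).ne'
  have hw := div_le_one_sub_rpow_div (by linarith : 2 * p < 0) hr hs hsr
  set w := (1 - s ^ (2 * p)) / (1 - r ^ (2 * p))
  have hw' : (s ^ (2 * p) - r ^ (2 * p)) / (1 - r ^ (2 * p)) = 1 - w := by
    rw [eq_sub_iff_add_eq, ← add_div, sub_add_sub_cancel', div_self hrc]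
  have hs2 : s ^ (-2 : ℝ) = (s ^ 2)⁻¹ := by
    rw [rpow_neg (by linarith), rpow_two]
  simp only [Fpq, hw', hs2, div_one, rpow_one]
  have hgap : 0 ≤ (r ^ 2 + α ^ 2) - (1 + α ^ 2 * r ^ 2) := by
    nlinarith [mul_nonneg (sub_nonneg.2 hα) (by nlinarith : (0 : ℝ) ≤ r ^ 2 - 1)]
  have hmono := mul_le_mul_of_nonneg_right hw hgap
  have hlin : (s - 1) / (r - 1) * ((r ^ 2 + α ^ 2) - (1 + α ^ 2 * r ^ 2))
      = (s - 1) * (r + 1) * (1 - α ^ 2) := by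
    field_simp; ring
  have hexcess : 0 ≤ α ^ 2 * ((s - 1) * (r - s)) * ((r + 1) * s + r) / s ^ 2 := by
    have : 0 ≤ (s - 1) * (r - s) := mul_nonneg (by linarith) (by linarith)
    positivity
  have hid :
      1 + α ^ 2 * r ^ 2 + (s - 1) * (r + 1) * (1 - α ^ 2) - s ^ 2 - α ^ 2 * r ^ 2 * (s ^ 2)⁻¹ =
        (s - 1) * (r - s) + α ^ 2 * ((s - 1) * (r - s)) * ((r + 1) * s + r) / s ^ 2 := by
    field_simp; ring
  linarith

lemma sub_one_mul_sub_le_Fpq {p q α r s : ℝ} (hp : p < 0) (hα : α ^ 2 ≤ 1) (hr : 1 < r)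
    (hs : 1 ≤ s) (hsr : s ≤ r) (hq : 1 ≤ q) : (s - 1) * (r - s) ≤ Fpq p q α r s :=
  (sub_one_mul_sub_le_Fpq_one hp hα hr hs hsr).trans (Fpq_le_Fpq_of_le hp hr hs hsr one_pos hq)

lemma intervalIntegrable_inv_sqrt_Fpq {p q α r : ℝ} (hp : p < 0) (hα : α ^ 2 ≤ 1) (hr : 1 < r)
    (hq : 1 ≤ q) : IntervalIntegrable (fun s => (√(Fpq p q α r s))⁻¹) volume 1 r := by
  rw [intervalIntegrable_iff_integrableOn_Ioo_of_le hr.le]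
  refine (integrableOn_inv_sqrt_sub_mul_sub hr).mono' (by unfold Fpq; fun_prop)
    (ae_restrict_of_forall_mem measurableSet_Ioo fun s hs => ?_)
  rw [norm_of_nonneg (by positivity)]
  exact inv_anti₀ (sqrt_pos.2 (mul_pos (sub_pos.2 hs.1) (sub_pos.2 hs.2)))
    (sqrt_le_sqrt (sub_one_mul_sub_le_Fpq hp hα hr hs.1.le hs.2.le hq))

theorem stmt_18 (p α r : ℝ) (hp : p ≤ -1) (hα₀ : 0 < α) (hα₁ : α < 1) (hr : 1 < r)
    (q₁ q₂ : ℝ) (hq₁ : 1 ≤ q₁) (h₁₂ : q₁ ≤ q₂) :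
    ThetaPQ p q₂ α r ≤ ThetaPQ p q₁ α r := by
  have hp₀ : p < 0 := by linarith
  have hα : α ^ 2 ≤ 1 := by nlinarith
  refine intervalIntegral.integral_mono_on_of_le_Ioo hr.le
    (intervalIntegrable_inv_sqrt_Fpq hp₀ hα hr (hq₁.trans h₁₂))
    (intervalIntegrable_inv_sqrt_Fpq hp₀ hα hr hq₁) fun s hs => ?_
  have hpos : 0 < Fpq p q₁ α r s :=
    (mul_pos (sub_pos.2 hs.1) (sub_pos.2 hs.2)).trans_le
      (sub_one_mul_sub_le_Fpq hp₀ hα hr hs.1.le hs.2.le hq₁)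
  exact inv_anti₀ (sqrt_pos.2 hpos)
    (sqrt_le_sqrt (Fpq_le_Fpq_of_le hp₀ hr hs.1.le hs.2.le (by linarith) h₁₂))
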